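/- In the hard instance M_{(i*,a*)}, for every stationary policy π, the value of π at the initial state satisfies V^π(s_{1,1}) = (γ²/(1−γ)) · ( 1/2 + ε · π(a_{i*}|s_{1,1}) · π(a*|s_{2,i*}) ). Consequently, since ε ≥ 0, the optimal value is sup_π V^π(s_{1,1}) = (γ²/(1−γ)) · (1/2 + ε), attained by any policy with π(a_{i*}|s_{1,1}) = 1 and π(a*|s_{2,i*}) = 1. -/

import Mathlib

open Finset

noncomputable section

/-- State space of the hard lower-bound instance: the initial state `s_{1,1}`,
the second-level states `s_{2,1},…,s_{2,d−4}`, the good state `s^g`, the bad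
state `s^b`, the outlier hub `s^o`, and the outlier states `s^o_1,…,s^o_{S−d}`
(so there are `S` states in total when `S ≥ d`). -/
inductive HState (d S : ℕ) where
  | init : HState d S
  | second : Fin (d - 4) → HState d S
  | good : HState d S
  | bad : HState d S
  | outlierHub : HState d S
  | outlier : Fin (S - d) → HState d S
  deriving DecidableEq, Fintype

/-- Transition kernel of the hard instance `M_{(i*,a*)}`: from `s_{1,1}`, action
`a_i` with `i ≤ d−4` leads deterministically to `s_{2,i}` and any other action
leads to `s^o`; from `s_{2,i}` with `(i,a) ≠ (i*,a*)` the next state is `s^g`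
or `s^b` each with probability `1/2`, while from `s_{2,i*}` under `a*` it is
`s^g` with probability `1/2+ε` and `s^b` with probability `1/2−ε`; from `s^o`
and each `s^o_j` every action leads to a uniformly random outlier state; `s^g`
and `s^b` are absorbing. -/
def hP {d S A : ℕ} (istar : Fin (d - 4)) (astar : Fin A) (ε : ℝ) :
    HState d S → Fin A → HState d S → ℝ
  | .init, a, .second i => if (a : ℕ) = (i : ℕ) then 1 else 0
  | .init, a, .outlierHub => if d - 4 ≤ (a : ℕ) then 1 else 0
  | .second i, a, .good => if i = istar ∧ a = astar then 1 / 2 + ε else 1 / 2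
  | .second i, a, .bad => if i = istar ∧ a = astar then 1 / 2 - ε else 1 / 2
  | .outlierHub, _, .outlier _ => 1 / ((S - d : ℕ) : ℝ)
  | .outlier _, _, .outlier _ => 1 / ((S - d : ℕ) : ℝ)
  | .good, _, .good => 1
  | .bad, _, .bad => 1
  | _, _, _ => 0

/-- Reward of the hard instance: `1` at the good state, `1/2` at the outlier
states, `0` elsewhere. -/
def hR {d S : ℕ} : HState d S → ℝ
  | .good => 1
  | .outlier _ => 1 / 2
  | _ => 0

/-- Probability that the state at step `τ` equals `s`, when actions are drawn
from policy `π` and transitions from kernel `P`, starting at `s0`. -/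
def stateDist {St Ac : Type*} [Fintype St] [Fintype Ac] [DecidableEq St]
    (P : St → Ac → St → ℝ) (π : St → Ac → ℝ) (s0 : St) : ℕ → St → ℝ
  | 0 => fun s => if s = s0 then 1 else 0
  | τ + 1 => fun s' => ∑ s, ∑ a, stateDist P π s0 τ s * π s a * P s a s'

/-- Discounted value `V_{P,r}^π(s0) = Σ_{τ=0}^∞ γ^τ E[r(s_τ,a_τ) | π, P, s0]`. -/
def value {St Ac : Type*} [Fintype St] [Fintype Ac] [DecidableEq St] (γ : ℝ)
    (P : St → Ac → St → ℝ) (r : St → Ac → ℝ) (π : St → Ac → ℝ) (s0 : St) : ℝ :=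
  ∑' τ : ℕ, γ ^ τ * ∑ s, ∑ a, stateDist P π s0 τ s * π s a * r s a

namespace HardInstance
open HState

variable {d S A : ℕ}

/-- Equivalence used to decompose sums over `HState`. -/
def hEquiv (d S : ℕ) : HState d S ≃ (Unit ⊕ Fin (d-4) ⊕ Unit ⊕ Unit ⊕ Unit ⊕ Fin (S-d)) where
  toFun s := match s with
    | .init => .inl ()
    | .second i => .inr (.inl i)
    | .good => .inr (.inr (.inl ()))
    | .bad => .inr (.inr (.inr (.inl ())))
    | .outlierHub => .inr (.inr (.inr (.inr (.inl ()))))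
    | .outlier j => .inr (.inr (.inr (.inr (.inr j))))
  invFun x := match x with
    | .inl _ => .init
    | .inr (.inl i) => .second i
    | .inr (.inr (.inl _)) => .good
    | .inr (.inr (.inr (.inl _))) => .bad
    | .inr (.inr (.inr (.inr (.inl _)))) => .outlierHub
    | .inr (.inr (.inr (.inr (.inr j)))) => .outlier j
  left_inv s := by cases s <;> rfl
  right_inv x := by rcases x with x | x | x | x | x | x <;> rfl

lemma hstate_sum (f : HState d S → ℝ) :
    ∑ s, f s = f .init + (∑ i, f (.second i)) + f .good + f .bad + f .outlierHub
      + ∑ j, f (.outlier j) := by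
  rw [← Equiv.sum_comp (hEquiv d S).symm f]
  simp [hEquiv, Fintype.sum_sum_type]
  ring

section Ksimp
variable (istar : Fin (d - 4)) (astar : Fin A) (ε : ℝ)

@[simp] lemma K_init_init (a : Fin A) : hP (S := S) istar astar ε .init a .init = 0 := rfl
@[simp] lemma K_init_second (a : Fin A) (i : Fin (d-4)) :
    hP (S := S) istar astar ε .init a (.second i) = if (a : ℕ) = (i : ℕ) then 1 else 0 := rfl
@[simp] lemma K_init_good (a : Fin A) : hP (S := S) istar astar ε .init a .good = 0 := rfl
@[simp] lemma K_init_bad (a : Fin A) : hP (S := S) istar astar ε .init a .bad = 0 := rfl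
@[simp] lemma K_init_hub (a : Fin A) :
    hP (S := S) istar astar ε .init a .outlierHub = if d - 4 ≤ (a : ℕ) then 1 else 0 := rfl
@[simp] lemma K_init_out (a : Fin A) (j : Fin (S-d)) :
    hP istar astar ε .init a (.outlier j) = 0 := rfl

@[simp] lemma K_sec_init (i : Fin (d-4)) (a : Fin A) :
    hP (S := S) istar astar ε (.second i) a .init = 0 := rfl
@[simp] lemma K_sec_second (i i' : Fin (d-4)) (a : Fin A) :
    hP (S := S) istar astar ε (.second i) a (.second i') = 0 := rfl
@[simp] lemma K_sec_good (i : Fin (d-4)) (a : Fin A) :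
    hP (S := S) istar astar ε (.second i) a .good
      = if i = istar ∧ a = astar then 1 / 2 + ε else 1 / 2 := rfl
@[simp] lemma K_sec_bad (i : Fin (d-4)) (a : Fin A) :
    hP (S := S) istar astar ε (.second i) a .bad
      = if i = istar ∧ a = astar then 1 / 2 - ε else 1 / 2 := rfl
@[simp] lemma K_sec_hub (i : Fin (d-4)) (a : Fin A) :
    hP (S := S) istar astar ε (.second i) a .outlierHub = 0 := rfl
@[simp] lemma K_sec_out (i : Fin (d-4)) (a : Fin A) (j : Fin (S-d)) :
    hP istar astar ε (.second i) a (.outlier j) = 0 := rfl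

@[simp] lemma K_good_init (a : Fin A) : hP (S := S) istar astar ε .good a .init = 0 := rfl
@[simp] lemma K_good_second (a : Fin A) (i : Fin (d-4)) :
    hP (S := S) istar astar ε .good a (.second i) = 0 := rfl
@[simp] lemma K_good_good (a : Fin A) : hP (S := S) istar astar ε .good a .good = 1 := rfl
@[simp] lemma K_good_bad (a : Fin A) : hP (S := S) istar astar ε .good a .bad = 0 := rfl
@[simp] lemma K_good_hub (a : Fin A) : hP (S := S) istar astar ε .good a .outlierHub = 0 := rfl
@[simp] lemma K_good_out (a : Fin A) (j : Fin (S-d)) :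
    hP istar astar ε .good a (.outlier j) = 0 := rfl

@[simp] lemma K_bad_init (a : Fin A) : hP (S := S) istar astar ε .bad a .init = 0 := rfl
@[simp] lemma K_bad_second (a : Fin A) (i : Fin (d-4)) :
    hP (S := S) istar astar ε .bad a (.second i) = 0 := rfl
@[simp] lemma K_bad_good (a : Fin A) : hP (S := S) istar astar ε .bad a .good = 0 := rfl
@[simp] lemma K_bad_bad (a : Fin A) : hP (S := S) istar astar ε .bad a .bad = 1 := rfl
@[simp] lemma K_bad_hub (a : Fin A) : hP (S := S) istar astar ε .bad a .outlierHub = 0 := rfl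
@[simp] lemma K_bad_out (a : Fin A) (j : Fin (S-d)) :
    hP istar astar ε .bad a (.outlier j) = 0 := rfl

@[simp] lemma K_hub_init (a : Fin A) : hP (S := S) istar astar ε .outlierHub a .init = 0 := rfl
@[simp] lemma K_hub_second (a : Fin A) (i : Fin (d-4)) :
    hP (S := S) istar astar ε .outlierHub a (.second i) = 0 := rfl
@[simp] lemma K_hub_good (a : Fin A) : hP (S := S) istar astar ε .outlierHub a .good = 0 := rfl
@[simp] lemma K_hub_bad (a : Fin A) : hP (S := S) istar astar ε .outlierHub a .bad = 0 := rfl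
@[simp] lemma K_hub_hub (a : Fin A) : hP (S := S) istar astar ε .outlierHub a .outlierHub = 0 := rfl
@[simp] lemma K_hub_out (a : Fin A) (j : Fin (S-d)) :
    hP istar astar ε .outlierHub a (.outlier j) = 1 / ((S - d : ℕ) : ℝ) := rfl

@[simp] lemma K_out_init (j : Fin (S-d)) (a : Fin A) :
    hP istar astar ε (.outlier j) a .init = 0 := rfl
@[simp] lemma K_out_second (j : Fin (S-d)) (a : Fin A) (i : Fin (d-4)) :
    hP istar astar ε (.outlier j) a (.second i) = 0 := rfl
@[simp] lemma K_out_good (j : Fin (S-d)) (a : Fin A) :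
    hP istar astar ε (.outlier j) a .good = 0 := rfl
@[simp] lemma K_out_bad (j : Fin (S-d)) (a : Fin A) :
    hP istar astar ε (.outlier j) a .bad = 0 := rfl
@[simp] lemma K_out_hub (j : Fin (S-d)) (a : Fin A) :
    hP istar astar ε (.outlier j) a .outlierHub = 0 := rfl
@[simp] lemma K_out_out (j j' : Fin (S-d)) (a : Fin A) :
    hP istar astar ε (.outlier j) a (.outlier j') = 1 / ((S - d : ℕ) : ℝ) := rfl

@[simp] lemma R_init : hR (d := d) (S := S) .init = 0 := rfl
@[simp] lemma R_second (i : Fin (d-4)) : hR (d := d) (S := S) (.second i) = 0 := rfl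
@[simp] lemma R_good : hR (d := d) (S := S) .good = 1 := rfl
@[simp] lemma R_bad : hR (d := d) (S := S) .bad = 0 := rfl
@[simp] lemma R_hub : hR (d := d) (S := S) .outlierHub = 0 := rfl
@[simp] lemma R_out (j : Fin (S-d)) : hR (d := d) (S := S) (.outlier j) = 1/2 := rfl

end Ksimp
end HardInstance

namespace HardInstance

lemma value_eq (d S A : ℕ) (hd : 8 ≤ d) (hS : d + 1 ≤ S) (hA : d - 3 ≤ A)
    (ε : ℝ) (γ : ℝ) (hγ : γ ∈ Set.Ioo (0 : ℝ) 1)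
    (istar : Fin (d - 4)) (astar : Fin A)
    (aInit : Fin A) (haInit : (aInit : ℕ) = (istar : ℕ))
    (π : HState d S → Fin A → ℝ)
    (hπ0 : ∀ s a, 0 ≤ π s a) (hπ1 : ∀ s, ∑ a, π s a = 1) :
    value γ (hP istar astar ε) (fun s _ => hR s) π HState.init =
      γ ^ 2 / (1 - γ) *
        (1 / 2 + ε * π HState.init aInit * π (HState.second istar) astar) := by
  obtain ⟨hγ0, hγ1⟩ := hγ
  have hNpos : 0 < S - d := by omega
  have hN : ((S - d : ℕ) : ℝ) ≠ 0 := Nat.cast_ne_zero.mpr (by omega)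
  have hiA : ∀ i : Fin (d - 4), (i : ℕ) < A := fun i => by have := i.2; omega
  set D := stateDist (hP istar astar ε) π (HState.init : HState d S) with hD
  have step : ∀ (τ : ℕ) (s' : HState d S),
      D (τ + 1) s' = ∑ s, ∑ a, D τ s * π s a * hP istar astar ε s a s' := fun τ s' => rfl
  have hsum : ∀ (s : HState d S) (c r : ℝ), (∑ a, c * π s a * r) = c * r := by
    intro s c r
    rw [Finset.sum_congr rfl (fun a _ => by ring : ∀ a ∈ Finset.univ,
        c * π s a * r = (c * r) * π s a), ← Finset.mul_sum, hπ1, mul_one]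
  -- step-1 distribution
  have D0 : ∀ s : HState d S, D 0 s = if s = HState.init then 1 else 0 := fun s => rfl
  have D1init : D 1 HState.init = 0 := by
    rw [show (1 : ℕ) = 0 + 1 from rfl, step, hstate_sum]; simp [D0]
  have D1second : ∀ i : Fin (d - 4), D 1 (HState.second i) = π HState.init ⟨i, hiA i⟩ := by
    intro i
    rw [show (1 : ℕ) = 0 + 1 from rfl, step, hstate_sum]
    have key : ∀ a : Fin A, ((a : ℕ) = (i : ℕ)) ↔ (a = ⟨i, hiA i⟩) := by
      intro a; rw [Fin.ext_iff]
    simp [D0, key]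
  have D1good : D 1 HState.good = 0 := by
    rw [show (1 : ℕ) = 0 + 1 from rfl, step, hstate_sum]; simp [D0]
  have D1bad : D 1 HState.bad = 0 := by
    rw [show (1 : ℕ) = 0 + 1 from rfl, step, hstate_sum]; simp [D0]
  have D1hub : D 1 HState.outlierHub
      = ∑ a : Fin A, if d - 4 ≤ (a : ℕ) then π HState.init a else 0 := by
    rw [show (1 : ℕ) = 0 + 1 from rfl, step, hstate_sum]
    simp [D0, mul_ite]
  have D1out : ∀ j, D 1 (HState.outlier j) = 0 := by
    intro j
    rw [show (1 : ℕ) = 0 + 1 from rfl, step, hstate_sum]; simp [D0]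
  set Sig1 : ℝ := ∑ i, D 1 (HState.second i) with hSig1
  set pO : ℝ := D 1 HState.outlierHub with hpO
  set x : ℝ := π HState.init aInit * π (HState.second istar) astar with hx
  -- mass at step 1
  have mass : Sig1 + pO = 1 := by
    have haeq : aInit = ⟨(istar : ℕ), hiA istar⟩ := Fin.ext haInit
    set F : ℕ → ℝ := fun k => if h : k < A then π HState.init ⟨k, h⟩ else 0 with hF
    have e1 : Sig1 = ∑ k ∈ Finset.range (d - 4), F k := by
      rw [hSig1, ← Fin.sum_univ_eq_sum_range F (d - 4)]
      refine Finset.sum_congr rfl fun i _ => ?_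
      rw [D1second i, hF]; simp [hiA i]
    have e2 : ∑ k ∈ Finset.range (d - 4), F k
        = ∑ k ∈ Finset.range A, if k < d - 4 then F k else 0 := by
      have h1 : ∑ k ∈ Finset.range (d - 4), (if k < d - 4 then F k else 0)
          = ∑ k ∈ Finset.range A, (if k < d - 4 then F k else 0) :=
        Finset.sum_subset (Finset.range_subset_range.mpr (show d - 4 ≤ A by omega))
          (fun k _ hk => if_neg (fun hlt => hk (Finset.mem_range.mpr hlt)))
      rw [← h1]
      exact Finset.sum_congr rfl fun k hk => (if_pos (Finset.mem_range.mp hk)).symm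
    have e3 : ∑ k ∈ Finset.range A, (if k < d - 4 then F k else 0)
        = ∑ a : Fin A, if (a : ℕ) < d - 4 then π HState.init a else 0 := by
      rw [← Fin.sum_univ_eq_sum_range (fun k => if k < d - 4 then F k else 0) A]
      refine Finset.sum_congr rfl fun a _ => ?_
      by_cases h : (a : ℕ) < d - 4 <;> simp [h, hF, a.2]
    have e4 : (∑ a : Fin A, if (a : ℕ) < d - 4 then π HState.init a else 0)
        + ∑ a : Fin A, (if d - 4 ≤ (a : ℕ) then π HState.init a else 0) = 1 := by
      rw [← Finset.sum_add_distrib, ← hπ1 HState.init]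
      refine Finset.sum_congr rfl fun a _ => ?_
      by_cases h : (a : ℕ) < d - 4
      · rw [if_pos h, if_neg (by omega), add_zero]
      · rw [if_neg h, if_pos (by omega), zero_add]
    rw [e1, e2, e3, D1hub]; exact e4
  -- step-2 distribution
  have D2init : D 2 HState.init = 0 := by
    rw [show (2 : ℕ) = 1 + 1 from rfl, step, hstate_sum]; simp
  have D2second : ∀ i, D 2 (HState.second i) = 0 := by
    intro i
    rw [show (2 : ℕ) = 1 + 1 from rfl, step, hstate_sum]; simp [D1init]
  have D2hub : D 2 HState.outlierHub = 0 := by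
    rw [show (2 : ℕ) = 1 + 1 from rfl, step, hstate_sum]; simp [D1init]
  have D2out : ∀ j, D 2 (HState.outlier j) = pO * (1 / ((S - d : ℕ) : ℝ)) := by
    intro j
    rw [show (2 : ℕ) = 1 + 1 from rfl, step, hstate_sum]
    simp [D1init, D1out, hsum]
    exact Or.inl hpO.symm
  have D2good : D 2 HState.good = Sig1 * (1 / 2) + ε * x := by
    rw [show (2 : ℕ) = 1 + 1 from rfl, step, hstate_sum]
    have key : ∀ i : Fin (d - 4),
        (∑ a, D 1 (HState.second i) * π (HState.second i) a *
          hP (S := S) istar astar ε (HState.second i) a HState.good)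
        = D 1 (HState.second i) * (1 / 2)
          + (if i = istar then ε * D 1 (HState.second istar) * π (HState.second istar) astar
              else 0) := by
      intro i
      simp only [K_sec_good]
      by_cases hi : i = istar
      · subst hi
        have h1 : ∀ a ∈ (Finset.univ : Finset (Fin A)),
            D 1 (HState.second i) * π (HState.second i) a *
              (if i = i ∧ a = astar then 1 / 2 + ε else 1 / 2)
            = D 1 (HState.second i) * π (HState.second i) a * (1 / 2)
              + (if a = astar then ε * D 1 (HState.second i) * π (HState.second i) a else 0) := by
          intro a _
          by_cases h : a = astar <;> simp [h] <;> ring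
        rw [Finset.sum_congr rfl h1, Finset.sum_add_distrib, hsum, Finset.sum_ite_eq']
        simp
      · have h1 : ∀ a ∈ (Finset.univ : Finset (Fin A)),
            D 1 (HState.second i) * π (HState.second i) a *
              (if i = istar ∧ a = astar then 1 / 2 + ε else 1 / 2)
            = D 1 (HState.second i) * π (HState.second i) a * (1 / 2) := by
          intro a _
          rw [if_neg (by tauto)]
        rw [Finset.sum_congr rfl h1, hsum, if_neg hi, add_zero]
    rw [Finset.sum_congr rfl (fun i _ => key i), Finset.sum_add_distrib,
      ← Finset.sum_mul, Finset.sum_ite_eq']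
    have haeq : aInit = ⟨(istar : ℕ), hiA istar⟩ := Fin.ext haInit
    simp only [D1init, D1good, D1bad, D1out, D1second istar, K_init_good, K_good_good,
      K_bad_good, K_hub_good, K_out_good, mul_zero, zero_mul, mul_one,
      Finset.sum_const_zero, Finset.mem_univ, if_pos]
    rw [hx, hSig1, ← haeq]
    ring
  set B : ℝ := D 2 HState.bad with hB
  set W : ℝ := pO * (1 / ((S - d : ℕ) : ℝ)) with hW
  -- stationarity from step 2 on
  have inv : ∀ n : ℕ, D (n + 2) HState.init = 0 ∧ (∀ i, D (n + 2) (HState.second i) = 0)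
      ∧ D (n + 2) HState.outlierHub = 0
      ∧ D (n + 2) HState.good = Sig1 * (1 / 2) + ε * x
      ∧ D (n + 2) HState.bad = B
      ∧ (∀ j, D (n + 2) (HState.outlier j) = W) := by
    intro n
    induction n with
    | zero => exact ⟨D2init, D2second, D2hub, D2good, rfl, D2out⟩
    | succ n ih =>
      obtain ⟨h1, h2, h3, h4, h5, h6⟩ := ih
      have e : n + 1 + 2 = (n + 2) + 1 := by omega
      refine ⟨?_, ?_, ?_, ?_, ?_, ?_⟩
      · rw [e, step, hstate_sum]; simp
      · intro i; rw [e, step, hstate_sum]; simp [h1]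
      · rw [e, step, hstate_sum]; simp [h1]
      · rw [e, step, hstate_sum]
        simp [h1, h2, h3, h4, h5, h6, hsum]
        rw [← Finset.mul_sum, hπ1, mul_one]
      · rw [e, step, hstate_sum]
        simp [h1, h2, h3, h4, h5, h6, hsum]
        rw [← Finset.mul_sum, hπ1, mul_one]
      · intro j
        rw [e, step, hstate_sum]
        simp [h1, h2, h3, h4, h5, h6, hsum, Finset.sum_const, Finset.card_univ]
        rw [hW]
        field_simp
  -- rewards
  have rew : ∀ τ : ℕ, (∑ s, ∑ a, D τ s * π s a * hR s)
      = if τ = 0 ∨ τ = 1 then 0 else 1 / 2 + ε * x := by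
    intro τ
    have collapse : ∀ τ : ℕ, (∑ s, ∑ a, D τ s * π s a * hR s) = ∑ s, D τ s * hR s :=
      fun τ => Finset.sum_congr rfl fun s _ => hsum s (D τ s) (hR s)
    match τ with
    | 0 => rw [collapse, hstate_sum]; simp [D0]
    | 1 => rw [collapse, hstate_sum]; simp [D1init, D1good, D1bad, D1out]
    | (n + 2) =>
      obtain ⟨h1, h2, h3, h4, h5, h6⟩ := inv n
      rw [collapse, hstate_sum]
      simp [h1, h2, h3, h4, h5, h6, Finset.sum_const, Finset.card_univ]
      rw [hW]
      have h12 : Sig1 = 1 - pO := by linarith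
      field_simp [h12]
      ring
      linarith
  -- summing the series
  have hval : value γ (hP istar astar ε) (fun s _ => hR s) π HState.init
      = ∑' τ : ℕ, γ ^ τ * (if τ = 0 ∨ τ = 1 then 0 else 1 / 2 + ε * x) := by
    rw [value]
    exact tsum_congr fun τ => by rw [← rew τ]
  set C : ℝ := 1 / 2 + ε * x with hC
  have hsum2 : Summable (fun n : ℕ => γ ^ (n + 2) * C) := by
    have : (fun n : ℕ => γ ^ (n + 2) * C) = fun n : ℕ => (γ ^ 2 * C) * γ ^ n := by
      funext n; rw [pow_add]; ring
    rw [this]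
    exact (summable_geometric_of_lt_one hγ0.le hγ1).mul_left _
  have hf : Summable (fun τ : ℕ => γ ^ τ * (if τ = 0 ∨ τ = 1 then 0 else C)) := by
    rw [← summable_nat_add_iff 2]
    exact hsum2.congr fun n => by rw [if_neg (by omega)]
  rw [hval, Summable.tsum_eq_zero_add hf, Summable.tsum_eq_zero_add ((summable_nat_add_iff 1).mpr hf)]
  have e2 : ∑' n : ℕ, γ ^ (n + 1 + 1) * (if n + 1 + 1 = 0 ∨ n + 1 + 1 = 1 then 0 else C)
      = γ ^ 2 * C * (1 - γ)⁻¹ := by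
    have : ∀ n : ℕ, γ ^ (n + 1 + 1) * (if n + 1 + 1 = 0 ∨ n + 1 + 1 = 1 then 0 else C)
        = (γ ^ 2 * C) * γ ^ n := by
      intro n; rw [if_neg (by omega), pow_add, pow_add]; ring
    rw [tsum_congr this, tsum_mul_left, tsum_geometric_of_lt_one hγ0.le hγ1]
  rw [e2]
  have : (1 : ℝ) - γ ≠ 0 := by nlinarith
  field_simp [hC]
  ring
  simp only [true_or, or_true, if_true, hC, hx]
  ring

end HardInstance

/-- In the hard instance `M_{(i*,a*)}`, every stationary policy `π` satisfies
`V^π(s_{1,1}) = (γ²/(1−γ))·(1/2 + ε·π(a_{i*}|s_{1,1})·π(a*|s_{2,i*}))`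
(where `a_{i*}` is the action whose index equals `i*`); consequently, since
`ε ≥ 0`, the optimal value over stationary policies is
`(γ²/(1−γ))·(1/2 + ε)`, and it is attained. -/
theorem stmt_12 (d S A : ℕ) (hd : 8 ≤ d) (hS : d + 1 ≤ S) (hA : d - 3 ≤ A)
    (ε : ℝ) (hε : ε ∈ Set.Icc (0 : ℝ) (1 / 4))
    (γ : ℝ) (hγ : γ ∈ Set.Ioo (0 : ℝ) 1)
    (istar : Fin (d - 4)) (astar : Fin A)
    (aInit : Fin A) (haInit : (aInit : ℕ) = (istar : ℕ))
    (π : HState d S → Fin A → ℝ)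
    (hπ0 : ∀ s a, 0 ≤ π s a) (hπ1 : ∀ s, ∑ a, π s a = 1) :
    value γ (hP istar astar ε) (fun s _ => hR s) π HState.init =
        γ ^ 2 / (1 - γ) *
          (1 / 2 + ε * π HState.init aInit * π (HState.second istar) astar) ∧
      IsGreatest
        {v | ∃ π' : HState d S → Fin A → ℝ, (∀ s a, 0 ≤ π' s a) ∧
          (∀ s, ∑ a, π' s a = 1) ∧
          value γ (hP istar astar ε) (fun s _ => hR s) π' HState.init = v}
        (γ ^ 2 / (1 - γ) * (1 / 2 + ε)) := by
  have main := HardInstance.value_eq d S A hd hS hA ε γ hγ istar astar aInit haInit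
  refine ⟨main π hπ0 hπ1, ?_, ?_⟩
  · -- the optimal value is attained by the deterministic policy below
    set π' : HState d S → Fin A → ℝ := fun s a =>
      if s = HState.init then (if a = aInit then 1 else 0)
      else (if a = astar then 1 else 0) with hπ'
    have h0 : ∀ s a, 0 ≤ π' s a := by
      intro s a; simp only [hπ']; split_ifs <;> norm_num
    have h1 : ∀ s, ∑ a, π' s a = 1 := by
      intro s; simp only [hπ']
      split_ifs <;> simp [Finset.sum_ite_eq']
    refine ⟨π', h0, h1, ?_⟩
    rw [main π' h0 h1]
    have e1 : π' HState.init aInit = 1 := by simp [hπ']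
    have e2 : π' (HState.second istar) astar = 1 := by simp [hπ']
    rw [e1, e2]; ring
  · -- and it is an upper bound
    rintro v ⟨π', h0, h1, rfl⟩
    rw [main π' h0 h1]
    have hc : 0 ≤ γ ^ 2 / (1 - γ) := by
      have h' : (0 : ℝ) < 1 - γ := by linarith [hγ.2]
      positivity
    have ha : π' HState.init aInit ≤ 1 := by
      rw [← h1 HState.init]
      exact Finset.single_le_sum (fun a _ => h0 _ a) (Finset.mem_univ _)
    have hb : π' (HState.second istar) astar ≤ 1 := by
      rw [← h1 (HState.second istar)]
      exact Finset.single_le_sum (fun a _ => h0 _ a) (Finset.mem_univ _)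
    have hεx : ε * π' HState.init aInit * π' (HState.second istar) astar ≤ ε := by
      calc ε * π' HState.init aInit * π' (HState.second istar) astar
          ≤ ε * π' HState.init aInit * 1 :=
            mul_le_mul_of_nonneg_left hb (mul_nonneg hε.1 (h0 _ _))
        _ = ε * π' HState.init aInit := mul_one _
        _ ≤ ε * 1 := mul_le_mul_of_nonneg_left ha hε.1
        _ = ε := mul_one _
    apply mul_le_mul_of_nonneg_left _ hc
    linarith
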